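/- Let T_{k+1} be the symmetric block tridiagonal matrix written in 2×2 block form as [[T_k, E_kΓ_kᵀ],[Γ_kE_kᵀ, Ω_{k+1}]] with T_k and T_{k+1} positive definite. Then the (1,1) m×m block of T_{k+1}⁻¹ satisfies [T_{k+1}⁻¹]₁₁ = [T_k⁻¹]₁₁ + [Y]₁ Γ_kᵀ (Ω_{k+1} − Γ_k[Y]_kΓ_kᵀ)⁻¹ Γ_k [Y]₁ᵀ, where Y = T_k⁻¹E_k and [Y]₁, [Y]_k are its first and last m×m blocks. -/

import Mathlib

/-!
By the Schur complement formula, the leading `km × km` block of the inverse of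
`[[T, E Γᵀ], [Γ Eᵀ, Ω]]` is `T⁻¹ + T⁻¹ E Γᵀ S⁻¹ Γ Eᵀ T⁻¹` with `S = Ω - Γ Eᵀ T⁻¹ E Γᵀ`.
Since `T` is symmetric, `Eᵀ T⁻¹ = Yᵀ`, so the correction term is `Y (Γᵀ S⁻¹ Γ) Yᵀ`, whose
leading `m × m` block is `[Y]₁ Γᵀ S⁻¹ Γ [Y]₁ᵀ`; and `Eᵀ Y = [Y]_k` because `E` is the last
block column of the identity.
-/

open Matrix

/-- Last block column of the identity: `E_k = e_k ⊗ I_m`. -/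
noncomputable def lastBlockCol {k m : ℕ} : Matrix (Fin k × Fin m) (Fin m) ℝ :=
  Matrix.of fun p b =>
    if (p.1 : ℕ) = k - 1 then (1 : Matrix (Fin m) (Fin m) ℝ) p.2 b else 0

/-- The `i`-th `m × m` block of a block column vector. -/
noncomputable def blockOf {k m : ℕ} (M : Matrix (Fin k × Fin m) (Fin m) ℝ) (i : Fin k) :
    Matrix (Fin m) (Fin m) ℝ :=
  Matrix.of fun a b => M (i, a) b

/-- The leading `m × m` block of a `km × km` matrix (`k > 0`). -/
noncomputable def block11 {k m : ℕ} (hk : 0 < k)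
    (M : Matrix (Fin k × Fin m) (Fin k × Fin m) ℝ) : Matrix (Fin m) (Fin m) ℝ :=
  Matrix.of fun a b => M (⟨0, hk⟩, a) (⟨0, hk⟩, b)

/-- The leading `m × m` block of a `(k+1)m × (k+1)m` matrix written in
`(km) ⊕ m` block form (`k > 0`). -/
noncomputable def block11ext {k m : ℕ} (hk : 0 < k)
    (M : Matrix ((Fin k × Fin m) ⊕ Fin m) ((Fin k × Fin m) ⊕ Fin m) ℝ) :
    Matrix (Fin m) (Fin m) ℝ :=
  Matrix.of fun a b => M (Sum.inl (⟨0, hk⟩, a)) (Sum.inl (⟨0, hk⟩, b))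

namespace Matrix

variable {l n α : Type*} [Fintype l] [DecidableEq l] [Fintype n] [DecidableEq n] [CommRing α]

theorem toBlocks₁₁_inv_fromBlocks {A : Matrix l l α} {B : Matrix l n α} {C : Matrix n l α}
    {D : Matrix n n α} (hA : IsUnit A) (hS : IsUnit (D - C * A⁻¹ * B)) :
    (fromBlocks A B C D)⁻¹.toBlocks₁₁ = A⁻¹ + A⁻¹ * B * (D - C * A⁻¹ * B)⁻¹ * C * A⁻¹ := by
  let := hA.invertible
  let : Invertible (D - C * ⅟A * B) := by rw [invOf_eq_nonsing_inv]; exact hS.invertible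
  let := fromBlocks₁₁Invertible A B C D
  rw [← invOf_eq_nonsing_inv, invOf_fromBlocks₁₁_eq, toBlocks_fromBlocks₁₁]
  simp only [invOf_eq_nonsing_inv]

end Matrix

section BlockColumns

variable {k m : ℕ}

theorem lastBlockCol_transpose_mul (hk : 0 < k) (N : Matrix (Fin k × Fin m) (Fin m) ℝ) :
    (lastBlockCol : Matrix (Fin k × Fin m) (Fin m) ℝ)ᵀ * N =
      blockOf N ⟨k - 1, Nat.sub_lt hk one_pos⟩ := by
  ext a b
  simp only [mul_apply, transpose_apply, lastBlockCol, of_apply, blockOf,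
    Fintype.sum_prod_type, ite_mul, zero_mul, one_apply]
  rw [Finset.sum_eq_single ⟨k - 1, Nat.sub_lt hk one_pos⟩]
  · simp
  · intro i _ hi
    simp [Fin.ext_iff.not.mp hi]
  · simp

theorem blockOf_mul (P : Matrix (Fin k × Fin m) (Fin m) ℝ) (N : Matrix (Fin m) (Fin m) ℝ)
    (i : Fin k) : blockOf (P * N) i = blockOf P i * N := by
  ext a b
  simp [blockOf, mul_apply]

theorem block11_add (hk : 0 < k) (M N : Matrix (Fin k × Fin m) (Fin k × Fin m) ℝ) :
    block11 hk (M + N) = block11 hk M + block11 hk N :=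
  rfl

theorem block11_mul_transpose (hk : 0 < k) (P Q : Matrix (Fin k × Fin m) (Fin m) ℝ) :
    block11 hk (P * Qᵀ) = blockOf P ⟨0, hk⟩ * (blockOf Q ⟨0, hk⟩)ᵀ := by
  ext a b
  simp [block11, blockOf, mul_apply]

theorem block11ext_eq_block11_toBlocks₁₁ (hk : 0 < k)
    (M : Matrix ((Fin k × Fin m) ⊕ Fin m) ((Fin k × Fin m) ⊕ Fin m) ℝ) :
    block11ext hk M = block11 hk M.toBlocks₁₁ :=
  rfl

theorem block11ext_inv_fromBlocks (hk : 0 < k)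
    {T : Matrix (Fin k × Fin m) (Fin k × Fin m) ℝ} (hT : IsUnit T) (hTs : T.IsSymm)
    (Γ Ω : Matrix (Fin m) (Fin m) ℝ) (E : Matrix (Fin k × Fin m) (Fin m) ℝ)
    (hS : IsUnit (Ω - Γ * (Eᵀ * (T⁻¹ * E)) * Γᵀ)) :
    block11ext hk ((fromBlocks T (E * Γᵀ) (Γ * Eᵀ) Ω)⁻¹) =
      block11 hk T⁻¹ +
        blockOf (T⁻¹ * E) ⟨0, hk⟩ * Γᵀ * (Ω - Γ * (Eᵀ * (T⁻¹ * E)) * Γᵀ)⁻¹ *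
          Γ * (blockOf (T⁻¹ * E) ⟨0, hk⟩)ᵀ := by
  set Y := T⁻¹ * E
  set S := Ω - Γ * (Eᵀ * Y) * Γᵀ
  have hYt : Eᵀ * T⁻¹ = Yᵀ := by
    rw [transpose_mul, transpose_nonsing_inv, hTs.eq]
  have hSchur : Ω - Γ * Eᵀ * T⁻¹ * (E * Γᵀ) = S := by
    simp only [Matrix.mul_assoc, S, Y]
  have hCorr : T⁻¹ * (E * Γᵀ) * S⁻¹ * (Γ * Eᵀ) * T⁻¹ = Y * (Γᵀ * S⁻¹ * Γ) * Yᵀ := by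
    simp only [Matrix.mul_assoc, ← hYt, Y]
  rw [block11ext_eq_block11_toBlocks₁₁, toBlocks₁₁_inv_fromBlocks hT (hSchur ▸ hS), hSchur, hCorr,
    block11_add, block11_mul_transpose, blockOf_mul]
  simp only [Matrix.mul_assoc]

end BlockColumns

theorem stmt_10_general {k m : ℕ} (hk : 0 < k)
    (T : Matrix (Fin k × Fin m) (Fin k × Fin m) ℝ) (hT : T.PosDef)
    (Γ Ω : Matrix (Fin m) (Fin m) ℝ)
    (hSchur : IsUnit (Ω - Γ * blockOf (T⁻¹ * lastBlockCol) ⟨k - 1, Nat.sub_lt hk one_pos⟩ * Γᵀ)) :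
    block11ext hk ((Matrix.fromBlocks T (lastBlockCol * Γᵀ) (Γ * lastBlockColᵀ) Ω)⁻¹) =
      block11 hk (T⁻¹) +
        blockOf (T⁻¹ * lastBlockCol) ⟨0, hk⟩ * Γᵀ *
          (Ω - Γ * blockOf (T⁻¹ * lastBlockCol) ⟨k - 1, Nat.sub_lt hk one_pos⟩ * Γᵀ)⁻¹ *
          Γ * (blockOf (T⁻¹ * lastBlockCol) ⟨0, hk⟩)ᵀ := by
  have h := block11ext_inv_fromBlocks hk hT.isUnit
    (isHermitian_iff_isSymm.mp hT.isHermitian) Γ Ω lastBlockCol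
    (by rwa [lastBlockCol_transpose_mul hk])
  rwa [lastBlockCol_transpose_mul hk] at h

theorem stmt_10 {k m : ℕ} (hk : 0 < k)
    (T : Matrix (Fin k × Fin m) (Fin k × Fin m) ℝ) (hT : T.PosDef)
    (Γ Ω : Matrix (Fin m) (Fin m) ℝ)
    (hText : (Matrix.fromBlocks T (lastBlockCol * Γᵀ) (Γ * lastBlockColᵀ) Ω).PosDef)
    (hSchur : IsUnit (Ω - Γ * blockOf (T⁻¹ * lastBlockCol) ⟨k - 1, Nat.sub_lt hk one_pos⟩ * Γᵀ)) :
    block11ext hk ((Matrix.fromBlocks T (lastBlockCol * Γᵀ) (Γ * lastBlockColᵀ) Ω)⁻¹) =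
      block11 hk (T⁻¹) +
        blockOf (T⁻¹ * lastBlockCol) ⟨0, hk⟩ * Γᵀ *
          (Ω - Γ * blockOf (T⁻¹ * lastBlockCol) ⟨k - 1, Nat.sub_lt hk one_pos⟩ * Γᵀ)⁻¹ *
          Γ * (blockOf (T⁻¹ * lastBlockCol) ⟨0, hk⟩)ᵀ :=
  stmt_10_general hk T hT Γ Ω hSchur
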